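/- arXiv:2502.13596 — 2 statements merged into one kernel-verified Lean document; each statement's English description precedes it below -/
import Mathlib

section
/- If H is an induced subgraph of a graph G, then the energy of H is at most the energy of G, where energy is the sum of absolute values of adjacency eigenvalues. -/
/-!
For a real symmetric `A` with eigenvalues `λᵢ` and any `M` with `|xᵀ M x| ≤ xᵀ x` for all `x`,
expanding `tr (M A)` in an orthonormal eigenbasis `uᵢ` gives `tr (A M) = ∑ λᵢ uᵢᵀ M uᵢ ≤ ∑ |λᵢ|`.
For the principal submatrix `B = Pᵀ A P` (with `P` the coordinate embedding) and `S = sign B`,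
`∑ |μᵢ| = tr (B S) = tr (A (P S Pᵀ))`, and `P S Pᵀ` has a contractive quadratic form because
`S` does and `Pᵀ` does not increase norms. The induced subgraph's adjacency matrix is such a `B`.
-/

namespace Matrix

variable {m n : Type*} [Fintype m] [Fintype n]

lemma abs_dotProduct_mul_mul_transpose_mulVec_le {S : Matrix m m ℝ}
    (hS : ∀ y, |y ⬝ᵥ S *ᵥ y| ≤ y ⬝ᵥ y) {P : Matrix n m ℝ} (hP : ∀ x, Pᵀ *ᵥ x ⬝ᵥ Pᵀ *ᵥ x ≤ x ⬝ᵥ x) (x : n → ℝ) :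
    |x ⬝ᵥ (P * S * Pᵀ) *ᵥ x| ≤ x ⬝ᵥ x := by
  have h : x ⬝ᵥ (P * S * Pᵀ) *ᵥ x = Pᵀ *ᵥ x ⬝ᵥ S *ᵥ Pᵀ *ᵥ x := by
    rw [← mulVec_mulVec, ← mulVec_mulVec, dotProduct_mulVec x P, ← mulVec_transpose]
  exact h ▸ (hS _).trans (hP x)

variable [DecidableEq n]

lemma abs_dotProduct_diagonal_mulVec_le {d : n → ℝ} (hd : ∀ i, |d i| ≤ 1) (x : n → ℝ) :
    |x ⬝ᵥ diagonal d *ᵥ x| ≤ x ⬝ᵥ x := by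
  simp only [mulVec_diagonal, dotProduct]
  refine (Finset.abs_sum_le_sum_abs _ _).trans (Finset.sum_le_sum fun i _ => ?_)
  rw [mul_left_comm, abs_mul, abs_mul_self]
  exact mul_le_of_le_one_left (mul_self_nonneg _) (hd i)

lemma transpose_mulVec_dotProduct_self_of_mul_transpose_eq_one {U : Matrix n m ℝ}
    (hU : U * Uᵀ = 1) (x : n → ℝ) : Uᵀ *ᵥ x ⬝ᵥ Uᵀ *ᵥ x = x ⬝ᵥ x := by
  rw [dotProduct_mulVec, vecMul_transpose, mulVec_mulVec, hU, one_mulVec]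

lemma trace_eq_sum_dotProduct_mulVec {U : Matrix n n ℝ} (hU : U * Uᵀ = 1) (X : Matrix n n ℝ) :
    X.trace = ∑ i, Uᵀ i ⬝ᵥ X *ᵥ Uᵀ i := by
  have h : X.trace = (Uᵀ * X * U).trace := by
    rw [trace_mul_cycle, hU, one_mul]
  rw [h]
  refine Finset.sum_congr rfl fun i _ => ?_
  simp only [diag_apply, mul_apply, dotProduct, mulVec, transpose_apply, Finset.sum_mul,
    Finset.mul_sum]
  rw [Finset.sum_comm]
  exact Finset.sum_congr rfl fun a _ => Finset.sum_congr rfl fun b _ => by ring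

namespace IsHermitian

variable {A : Matrix n n ℝ} (hA : A.IsHermitian)

lemma eigenvectorUnitary_mul_transpose :
    (hA.eigenvectorUnitary : Matrix n n ℝ) * (hA.eigenvectorUnitary : Matrix n n ℝ)ᵀ = 1 := by
  rw [← conjTranspose_eq_transpose_of_trivial]
  exact Unitary.coe_mul_star_self _

lemma eigenvectorBasis_dotProduct_self (i : n) :
    ⇑(hA.eigenvectorBasis i) ⬝ᵥ ⇑(hA.eigenvectorBasis i) = 1 := by
  have h := congrFun (congrFun (Unitary.coe_star_mul_self hA.eigenvectorUnitary) i) i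
  rw [star_eq_conjTranspose, conjTranspose_eq_transpose_of_trivial, mul_apply', one_apply_eq] at h
  exact h

lemma trace_eq_sum_eigenvectorBasis (X : Matrix n n ℝ) :
    X.trace = ∑ i, ⇑(hA.eigenvectorBasis i) ⬝ᵥ X *ᵥ ⇑(hA.eigenvectorBasis i) :=
  trace_eq_sum_dotProduct_mulVec hA.eigenvectorUnitary_mul_transpose X

lemma cfc_mulVec_eigenvectorBasis (f : ℝ → ℝ) (i : n) :
    hA.cfc f *ᵥ ⇑(hA.eigenvectorBasis i) = f (hA.eigenvalues i) • ⇑(hA.eigenvectorBasis i) := by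
  rw [IsHermitian.cfc, Unitary.conjStarAlgAut_apply, ← mulVec_mulVec, ← mulVec_mulVec,
    star_eigenvectorUnitary_mulVec, diagonal_mulVec_single, mulVec_single]
  ext j
  simp [mul_comm]

theorem trace_mul_le_sum_abs_eigenvalues {M : Matrix n n ℝ}
    (hM : ∀ x, |x ⬝ᵥ M *ᵥ x| ≤ x ⬝ᵥ x) : (A * M).trace ≤ ∑ i, |hA.eigenvalues i| := by
  rw [trace_mul_comm, hA.trace_eq_sum_eigenvectorBasis]
  refine Finset.sum_le_sum fun i _ => ?_
  rw [← mulVec_mulVec, mulVec_eigenvectorBasis, mulVec_smul, dotProduct_smul, smul_eq_mul]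
  calc _ ≤ |hA.eigenvalues i| * |⇑(hA.eigenvectorBasis i) ⬝ᵥ M *ᵥ ⇑(hA.eigenvectorBasis i)| :=
        (le_abs_self _).trans (abs_mul _ _).le
    _ ≤ |hA.eigenvalues i| := by
        refine mul_le_of_le_one_right (abs_nonneg _) ?_
        simpa only [eigenvectorBasis_dotProduct_self] using hM (hA.eigenvectorBasis i)

theorem trace_mul_cfc_sign :
    (A * hA.cfc (fun x => (SignType.sign x : ℝ))).trace = ∑ i, |hA.eigenvalues i| := by
  rw [hA.trace_eq_sum_eigenvectorBasis]
  refine Finset.sum_congr rfl fun i _ => ?_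
  rw [← mulVec_mulVec, cfc_mulVec_eigenvectorBasis, mulVec_smul, mulVec_eigenvectorBasis, smul_smul,
    dotProduct_smul, eigenvectorBasis_dotProduct_self, smul_eq_mul, mul_one, sign_mul_self]

lemma abs_dotProduct_cfc_mulVec_le {f : ℝ → ℝ} (hf : ∀ x, |f x| ≤ 1) (y : n → ℝ) :
    |y ⬝ᵥ hA.cfc f *ᵥ y| ≤ y ⬝ᵥ y := by
  rw [IsHermitian.cfc, Unitary.conjStarAlgAut_apply, star_eq_conjTranspose,
    conjTranspose_eq_transpose_of_trivial]
  exact abs_dotProduct_mul_mul_transpose_mulVec_le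
    (abs_dotProduct_diagonal_mulVec_le fun i => hf _)
    (fun x => (transpose_mulVec_dotProduct_self_of_mul_transpose_eq_one
      hA.eigenvectorUnitary_mul_transpose x).le) y

end IsHermitian

lemma dotProduct_self_comp_le {f : m → n} (hf : Function.Injective f) (x : n → ℝ) :
    x ∘ f ⬝ᵥ x ∘ f ≤ x ⬝ᵥ x := by
  simp only [dotProduct, Function.comp_apply]
  rw [← Finset.sum_image (f := fun i => x i * x i) fun a _ b _ h => hf h]
  exact Finset.sum_le_sum_of_subset_of_nonneg (Finset.subset_univ _)
    fun i _ _ => mul_self_nonneg (x i)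

theorem IsHermitian.sum_abs_eigenvalues_submatrix_le {A : Matrix n n ℝ} (hA : A.IsHermitian)
    [DecidableEq m] {f : m → n} (hf : Function.Injective f) (hB : (A.submatrix f f).IsHermitian) :
    ∑ i, |hB.eigenvalues i| ≤ ∑ i, |hA.eigenvalues i| := by
  set S := hB.cfc (fun x => (SignType.sign x : ℝ))
  set P : Matrix n m ℝ := (1 : Matrix n n ℝ).submatrix id f
  have hPx : ∀ x, Pᵀ *ᵥ x = x ∘ f := fun x => by
    ext a; simp [P, mulVec, dotProduct, one_apply]
  have hPAP : Pᵀ * A * P = A.submatrix f f := by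
    ext a b; simp [P, mul_apply, one_apply]
  calc ∑ i, |hB.eigenvalues i| = (A.submatrix f f * S).trace := hB.trace_mul_cfc_sign.symm
    _ = (A * (P * S * Pᵀ)).trace := by
        rw [← hPAP, Matrix.mul_assoc, Matrix.mul_assoc, trace_mul_comm]
        simp only [Matrix.mul_assoc]
    _ ≤ ∑ i, |hA.eigenvalues i| := by
        have hsign (x : ℝ) : |(SignType.sign x : ℝ)| ≤ 1 := by
          cases SignType.sign x <;> simp
        exact hA.trace_mul_le_sum_abs_eigenvalues (abs_dotProduct_mul_mul_transpose_mulVec_le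
          (hB.abs_dotProduct_cfc_mulVec_le hsign) fun x => hPx x ▸ dotProduct_self_comp_le hf x)

end Matrix

theorem stmt_12 {V : Type*} [Fintype V] [DecidableEq V] (G : SimpleGraph V) [DecidableRel G.Adj]
    (s : Finset V)
    (hA : (G.adjMatrix ℝ).IsHermitian)
    (hB : (((G.induce (s : Set V)).adjMatrix ℝ)).IsHermitian) :
    ∑ i, |hB.eigenvalues i| ≤ ∑ i, |hA.eigenvalues i| := by
  have hsub : (G.induce (s : Set V)).adjMatrix ℝ
      = (G.adjMatrix ℝ).submatrix Subtype.val Subtype.val := by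
    ext i j
    simp [SimpleGraph.comap_adj]
  revert hB
  rw [hsub]
  exact hA.sum_abs_eigenvalues_submatrix_le Subtype.val_injective
end

section
/- If G is a C₄-free graph on n vertices (G contains no cycle of length 4 as a subgraph), then the number of edges of G is at most n(1 + √(4n − 3))/4. -/
/-!
Count the paths `a - v - b` with `a ≠ b`: the ordered pair `(a, b)` determines the middle vertex
`v`, since `a` and `b` have at most one common neighbour, so `∑ d(v)(d(v) - 1) ≤ n(n - 1)`.
Cauchy–Schwarz gives `(2e)² ≤ n ∑ d(v)²`, hence `4e² ≤ n(n(n - 1) + 2e)`, and solving this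
quadratic inequality for `e` gives the bound.
-/

open Finset

theorem Finset.cast_card_offDiag {α R : Type*} [DecidableEq α] [Ring R] (s : Finset α) :
    (#s.offDiag : R) = #s * (#s - 1) := by
  rw [offDiag_card, Nat.cast_sub (Nat.le_mul_self _), Nat.cast_mul, mul_sub_one]

namespace SimpleGraph

variable {V : Type*} [Fintype V] (G : SimpleGraph V) [DecidableRel G.Adj]

theorem sum_card_offDiag_neighborFinset_le [DecidableEq V]
    (hG : ∀ u v : V, u ≠ v → Fintype.card (G.commonNeighbors u v) ≤ 1) :
    ∑ v, #(G.neighborFinset v).offDiag ≤ #(univ : Finset V).offDiag := by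
  rw [← card_sigma]
  refine card_le_card_of_injOn Sigma.snd (fun x hx ↦ ?_) ?_
  · simp_all
  · rintro ⟨v, a, b⟩ hv ⟨w, a', b'⟩ hw hab
    obtain ⟨rfl, rfl⟩ := Prod.mk.inj hab
    simp only [coe_sigma, Set.mem_sigma_iff, coe_univ, Set.mem_univ, coe_offDiag,
      Set.mem_offDiag, mem_coe, mem_neighborFinset, true_and] at hv hw
    obtain rfl : v = w := congrArg Subtype.val <| Fintype.card_le_one_iff.mp (hG a b hv.2.2)
      ⟨v, G.mem_commonNeighbors.2 ⟨hv.1.symm, hv.2.1.symm⟩⟩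
      ⟨w, G.mem_commonNeighbors.2 ⟨hw.1.symm, hw.2.1.symm⟩⟩
    rfl

theorem sum_degree_sq_le
    (hG : ∀ u v : V, u ≠ v → Fintype.card (G.commonNeighbors u v) ≤ 1) :
    ∑ v, (G.degree v : ℝ) ^ 2 ≤ Fintype.card V * (Fintype.card V - 1) + 2 * #G.edgeFinset := by
  classical
  have hdeg : ∑ v, (G.degree v : ℝ) = 2 * #G.edgeFinset := by
    exact_mod_cast G.sum_degrees_eq_twice_card_edges
  have hpaths : ∑ v, (G.degree v : ℝ) * (G.degree v - 1) ≤
      Fintype.card V * (Fintype.card V - 1) := by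
    have := (Nat.cast_le (α := ℝ)).2 (G.sum_card_offDiag_neighborFinset_le hG)
    simpa only [Nat.cast_sum, Finset.cast_card_offDiag, card_neighborFinset_eq_degree,
      card_univ] using this
  calc ∑ v, (G.degree v : ℝ) ^ 2
      = ∑ v, (G.degree v : ℝ) * (G.degree v - 1) + ∑ v, (G.degree v : ℝ) := by
        rw [← sum_add_distrib]; congr! 1 with v; ring
    _ ≤ _ := by rw [hdeg]; gcongr

theorem four_mul_card_edgeFinset_sq_le
    (hG : ∀ u v : V, u ≠ v → Fintype.card (G.commonNeighbors u v) ≤ 1) :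
    4 * (#G.edgeFinset : ℝ) ^ 2 ≤
      Fintype.card V * (Fintype.card V * (Fintype.card V - 1) + 2 * #G.edgeFinset) := by
  have hdeg : ∑ v, (G.degree v : ℝ) = 2 * #G.edgeFinset := by
    exact_mod_cast G.sum_degrees_eq_twice_card_edges
  calc 4 * (#G.edgeFinset : ℝ) ^ 2 = (∑ v, (G.degree v : ℝ)) ^ 2 := by rw [hdeg]; ring
    _ ≤ Fintype.card V * ∑ v, (G.degree v : ℝ) ^ 2 := sq_sum_le_card_mul_sum_sq
    _ ≤ _ := by gcongr; exact G.sum_degree_sq_le hG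

end SimpleGraph

theorem le_mul_one_add_sqrt_div_four_of_four_mul_sq_le {n e : ℝ} (hn : 0 ≤ n)
    (h : 4 * e ^ 2 ≤ n * (n * (n - 1) + 2 * e)) :
    e ≤ n * (1 + √(4 * n - 3)) / 4 := by
  rcases lt_or_ge n (3 / 4) with hn' | hn'
  · -- `4e² - 2ne ≥ -n²/4` forces `n²(3/4 - n) ≤ 0`, so `n = 0`.
    have : n ^ 2 * (3 / 4 - n) ≤ 0 := by nlinarith [sq_nonneg (2 * e - n / 2)]
    obtain rfl : n = 0 := by
      by_contra hn0
      exact this.not_gt (mul_pos (by positivity) (by linarith))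
    nlinarith
  · set s := √(4 * n - 3)
    have hs : s ^ 2 = 4 * n - 3 := Real.sq_sqrt (by linarith)
    have hns : 0 ≤ n * s := mul_nonneg hn (Real.sqrt_nonneg _)
    have hfactor : 4 * (e - n * (1 + s) / 4) * (e - n * (1 - s) / 4) =
        4 * e ^ 2 - n * (n * (n - 1) + 2 * e) := by
      linear_combination (-(n ^ 2) / 4) * hs
    by_contra! he
    nlinarith [mul_pos (by linarith : 0 < e - n * (1 + s) / 4)
      (by linarith : 0 < e - n * (1 - s) / 4)]

theorem stmt_17_general {V : Type*} [Fintype V] (G : SimpleGraph V) [DecidableRel G.Adj]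
    (n : ℕ) (hn : n = Fintype.card V)
    (hC4free : ∀ u v : V, u ≠ v → Fintype.card (G.commonNeighbors u v) ≤ 1) :
    (G.edgeFinset.card : ℝ) ≤ (n : ℝ) * (1 + Real.sqrt (4 * (n : ℝ) - 3)) / 4 := by
  subst hn
  exact le_mul_one_add_sqrt_div_four_of_four_mul_sq_le (Nat.cast_nonneg _)
    (G.four_mul_card_edgeFinset_sq_le hC4free)

theorem stmt_17 {V : Type*} [Fintype V] [DecidableEq V] (G : SimpleGraph V) [DecidableRel G.Adj]
    (n : ℕ) (hn : n = Fintype.card V)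
    (hC4free : ∀ u v : V, u ≠ v → Fintype.card (G.commonNeighbors u v) ≤ 1) :
    (G.edgeFinset.card : ℝ) ≤ (n : ℝ) * (1 + Real.sqrt (4 * (n : ℝ) - 3)) / 4 :=
  stmt_17_general G n hn hC4free
end
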